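/- Let G be a finite W_p graph (p a positive integer). If every connected component of G has independence number greater than 1, then the minimum degree of G satisfies δ(G) ≥ p. -/

import Mathlib

namespace WpGraphs

variable {V : Type*}

/-- `S` is an independent set of `G`: its vertices are pairwise non-adjacent. -/
def IsIndepSet (G : SimpleGraph V) (S : Set V) : Prop :=
  S.Pairwise fun u v => ¬ G.Adj u v

/-- The independence number `α(G)`: the cardinality of a largest independent set. -/
noncomputable def indepNum (G : SimpleGraph V) : ℕ :=
  sSup {n : ℕ | ∃ S : Set V, IsIndepSet G S ∧ S.ncard = n}

/-- A maximum independent set: an independent set of cardinality `α(G)`. -/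
def IsMaxIndepSet (G : SimpleGraph V) (S : Set V) : Prop :=
  IsIndepSet G S ∧ S.ncard = indepNum G

/-- A maximal independent set: an independent set that cannot be extended. -/
def IsMaximalIndepSet (G : SimpleGraph V) (S : Set V) : Prop :=
  IsIndepSet G S ∧ ∀ T : Set V, IsIndepSet G T → S ⊆ T → S = T

/-- `G` is a `W_p` graph: `n(G) ≥ p` and every `p` pairwise disjoint independent sets
are contained in `p` pairwise disjoint maximum independent sets. -/
def IsWp (G : SimpleGraph V) (p : ℕ) : Prop :=
  p ≤ Nat.card V ∧
    ∀ A : Fin p → Set V, (∀ i, IsIndepSet G (A i)) →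
      (Pairwise fun i j => Disjoint (A i) (A j)) →
      ∃ S : Fin p → Set V, (∀ i, IsMaxIndepSet G (S i)) ∧
        (Pairwise fun i j => Disjoint (S i) (S j)) ∧ ∀ i, A i ⊆ S i

/-- The neighborhood `N_G(S)` of a set of vertices `S`. -/
def setNbhd (G : SimpleGraph V) (S : Set V) : Set V :=
  {v | v ∉ S ∧ ∃ u ∈ S, G.Adj u v}

/-- `G` is `λ`-quasi-regularizable: `λ·|S| ≤ |N_G(S)|` for every independent set `S`. -/
def QuasiReg (G : SimpleGraph V) (lam : ℝ) : Prop :=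
  ∀ S : Set V, IsIndepSet G S → lam * S.ncard ≤ ((setNbhd G S).ncard : ℝ)

/-- `s_k(G)`: the number of independent sets of cardinality `k` in `G`
(the `k`-th coefficient of the independence polynomial). -/
noncomputable def indepCount (G : SimpleGraph V) (k : ℕ) : ℕ :=
  {S : Set V | IsIndepSet G S ∧ S.ncard = k}.ncard

/-- The independence polynomial of `G` is log-concave:
`s_k² ≥ s_{k-1}·s_{k+1}` for all `1 ≤ k ≤ α(G) - 1`. -/
def IndepLogConcave (G : SimpleGraph V) : Prop :=
  ∀ k : ℕ, 1 ≤ k → k + 1 ≤ indepNum G →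
    indepCount G (k - 1) * indepCount G (k + 1) ≤ indepCount G k ^ 2

/-- The vertex set of the localization `G_A = G − N_G[A]`:
all vertices outside `A` having no neighbor in `A`. -/
def locSet (G : SimpleGraph V) (A : Set V) : Set V :=
  {v | v ∉ A ∧ ∀ u ∈ A, ¬ G.Adj u v}

/-- `G` is well-covered: all maximal independent sets have the same size. -/
def IsWellCovered (G : SimpleGraph V) : Prop :=
  ∀ S T : Set V, IsMaximalIndepSet G S → IsMaximalIndepSet G T → S.ncard = T.ncard

/-- `G` is very well-covered: well-covered, no isolated vertices, and `n(G) = 2·α(G)`. -/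
def IsVeryWellCovered (G : SimpleGraph V) : Prop :=
  IsWellCovered G ∧ (∀ v : V, ∃ w : V, G.Adj v w) ∧ Nat.card V = 2 * indepNum G

/-- The clique corona `G∘𝓗` where `𝓗 = {K_{p v} : v ∈ V(G)}`: each vertex `v` of `G`
is joined to all vertices of its own copy of the complete graph `K_{p v}`. -/
def cliqueCorona (G : SimpleGraph V) (p : V → ℕ) :
    SimpleGraph (V ⊕ Σ v : V, Fin (p v)) :=
  SimpleGraph.fromRel fun a b =>
    match a, b with
    | .inl u, .inl v => G.Adj u v
    | .inl u, .inr ⟨v, _⟩ => u = v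
    | .inr ⟨u, _⟩, .inr ⟨v, _⟩ => u = v
    | .inr _, .inl _ => False

/-! If `deg v < p`, fill `p` slots with disjoint independent sets: `{v}`, an independent set `X`
missing `N[v]`, and the `p - 2` colour classes of the neighbours of `v` without a neighbour in `X`.
The maximum independent set extending `X` misses `v`, so it must contain a neighbour of `v`; but
every neighbour of `v` is either adjacent to `X` or locked into another slot.
Such a filling exists: if a neighbour `w` of `v` has a neighbour `x ∉ N[v]`, take `X = {x}`, which
frees `w`; otherwise the component of `v` is `N[v]`, so `α > 1` gives two non-adjacent
neighbours of `v`, which can share a colour, and `X = ∅`. -/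

lemma IsIndepSet.ncard_le_indepNum [Finite V] {G : SimpleGraph V} {S : Set V}
    (hS : IsIndepSet G S) : S.ncard ≤ indepNum G :=
  le_csSup ⟨Nat.card V, by rintro _ ⟨T, -, rfl⟩; exact Set.ncard_le_card T⟩ ⟨S, hS, rfl⟩

lemma exists_isMaxIndepSet [Finite V] (G : SimpleGraph V) : ∃ S, IsMaxIndepSet G S :=
  Nat.sSup_mem (s := {n | ∃ S : Set V, IsIndepSet G S ∧ S.ncard = n})
    ⟨0, ∅, Set.pairwise_empty _, Set.ncard_empty V⟩
    ⟨Nat.card V, by rintro _ ⟨T, -, rfl⟩; exact Set.ncard_le_card T⟩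

lemma IsMaxIndepSet.exists_adj_of_notMem [Finite V] {G : SimpleGraph V} {S : Set V} {v : V}
    (hS : IsMaxIndepSet G S) (hv : v ∉ S) : ∃ w ∈ S, G.Adj v w := by
  by_contra! hvS
  have hins : IsIndepSet G (insert v S) :=
    hS.1.insert fun w hw _ => ⟨hvS w hw, fun h => hvS w hw h.symm⟩
  have := hins.ncard_le_indepNum
  rw [Set.ncard_insert_of_notMem hv, hS.2] at this
  omega

lemma exists_ne_not_adj_of_one_lt_indepNum [Finite V] {G : SimpleGraph V}
    (h : 1 < indepNum G) : ∃ a b, a ≠ b ∧ ¬ G.Adj a b := by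
  obtain ⟨S, hS, hcard⟩ := exists_isMaxIndepSet G
  obtain ⟨a, ha, b, hb, hab⟩ := (Set.one_lt_ncard_iff_nontrivial).mp (hcard ▸ h)
  exact ⟨a, b, hab, hS ha hb hab⟩

@[simp]
lemma locSet_empty (G : SimpleGraph V) : locSet G ∅ = Set.univ := by
  ext
  simp [locSet]

lemma mem_of_reachable_of_adj_closed {G : SimpleGraph V} {s : Set V}
    (hs : ∀ a ∈ s, ∀ b, G.Adj a b → b ∈ s) {u w : V} (h : G.Reachable u w) (hu : u ∈ s) :
    w ∈ s := by
  obtain ⟨q⟩ := h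
  induction q with
  | nil => exact hu
  | cons hadj _ ih => exact ih (hs _ hu _ hadj)

lemma exists_adj_adj_or_exists_nonadj_neighbors [Finite V] {G : SimpleGraph V} {v : V}
    (hv : 1 < indepNum (G.induce (G.connectedComponentMk v).supp)) :
    (∃ w x, G.Adj v w ∧ G.Adj w x ∧ x ≠ v ∧ ¬ G.Adj v x) ∨
      ∃ a b, G.Adj v a ∧ G.Adj v b ∧ a ≠ b ∧ ¬ G.Adj a b := by
  refine or_iff_not_imp_left.mpr fun hx => ?_
  push Not at hx
  have hclosed : ∀ a ∈ insert v (G.neighborSet v), ∀ b, G.Adj a b →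
      b ∈ insert v (G.neighborSet v) := by
    rintro a (rfl | hva) b hab
    · exact Or.inr hab
    · by_cases hbv : b = v
      · exact Or.inl hbv
      · exact Or.inr (hx a b hva hab hbv)
  set C := G.connectedComponentMk v
  have hmem (u : C.supp) : u.1 ∈ insert v (G.neighborSet v) :=
    mem_of_reachable_of_adj_closed hclosed
      (C.reachable_of_mem_supp SimpleGraph.ConnectedComponent.connectedComponentMk_mem u.2)
      (Set.mem_insert v _)
  have hadj_of {a b : C.supp} (hab : a ≠ b) (hnadj : ¬ G.Adj a b) : G.Adj v a := by
    rcases hmem a with ha | ha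
    · rcases hmem b with hb | hb
      · exact absurd (Subtype.ext (ha.trans hb.symm)) hab
      · exact absurd (ha ▸ hb) hnadj
    · exact ha
  obtain ⟨a, b, hab, hnadj⟩ := exists_ne_not_adj_of_one_lt_indepNum hv
  exact ⟨a, b, hadj_of hab hnadj, hadj_of hab.symm (fun h => hnadj h.symm),
    fun h => hab (Subtype.ext h), hnadj⟩

lemma colorable_natCard [Finite V] (G : SimpleGraph V) : G.Colorable (Nat.card V) := by
  have := Fintype.ofFinite V
  simpa [Nat.card_eq_fintype_card] using G.colorable_of_fintype

lemma colorable_natCard_sub_one_of_not_adj [Finite V] {G : SimpleGraph V} {a b : V}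
    (hab : a ≠ b) (hnadj : ¬ G.Adj a b) : G.Colorable (Nat.card V - 1) := by
  classical
  let C : G.Coloring {u // u ≠ b} := .mk (fun u => if hu : u = b then ⟨a, hab⟩ else ⟨u, hu⟩)
    fun {u w} huw heq => by
      by_cases hu : u = b <;> by_cases hw : w = b <;>
        simp only [ne_eq, hu, hw, ↓reduceDIte, Subtype.mk.injEq] at heq
      · subst hu hw
        exact G.loopless.irrefl _ huw
      · subst hu heq
        exact hnadj huw.symm
      · subst hw heq
        exact hnadj huw
      · subst heq
        exact G.loopless.irrefl _ huw
  have := Fintype.ofFinite V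
  have hcard : Nat.card {u // u ≠ b} = Nat.card V - 1 := by
    rw [Nat.card_eq_fintype_card, Nat.card_eq_fintype_card]
    exact Set.card_ne_eq b
  exact hcard ▸ (colorable_natCard (⊤ : SimpleGraph {u // u ≠ b})).of_hom C

lemma IsWp.exists_adj_of_mem [Finite V] {ι : Type*} {G : SimpleGraph V} {p : ℕ}
    (hG : IsWp G p) (e : ι ≃ Fin p) {A : ι → Set V} (hA : ∀ i, IsIndepSet G (A i))
    (hdisj : Pairwise fun i j => Disjoint (A i) (A j)) {i j : ι} (hij : i ≠ j) {v : V}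
    (hv : v ∈ A i) : ∃ w, G.Adj v w ∧ (∀ l ≠ j, w ∉ A l) ∧ ∀ x ∈ A j, ¬ G.Adj w x := by
  obtain ⟨S, hSmax, hSdisj, hAS⟩ := hG.2 (A ∘ e.symm) (fun _ => hA _)
    fun _ _ h => hdisj (e.symm.injective.ne h)
  have hSdisj' {l l' : ι} (h : l ≠ l') : Disjoint (S (e l)) (S (e l')) :=
    hSdisj (e.injective.ne h)
  have hAS' (l : ι) : A l ⊆ S (e l) := by simpa using hAS (e l)
  obtain ⟨w, hwS, hvw⟩ := (hSmax (e j)).exists_adj_of_notMem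
    ((hSdisj' hij).notMem_of_mem_left (hAS' i hv))
  exact ⟨w, hvw, fun l hl hwl => (hSdisj' hl).notMem_of_mem_left (hAS' l hwl) hwS,
    fun x hx hwx => (hSmax (e j)).1 hwS (hAS' j hx) hwx.ne hwx⟩

theorem IsWp.not_colorable_neighborSet_inter_locSet [Finite V] {G : SimpleGraph V} {k : ℕ}
    (hG : IsWp G (k + 2)) {v : V} {X : Set V} (hX : IsIndepSet G X) (hXv : X ⊆ locSet G {v}) :
    ¬ (G.induce (G.neighborSet v ∩ locSet G X)).Colorable k := by
  rintro ⟨C⟩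
  set R := G.neighborSet v ∩ locSet G X
  let A : Option (Option (Fin k)) → Set V
    | none => {v}
    | some none => X
    | some (some c) => Subtype.val '' C.colorClass c
  have hvX : v ∉ X := fun h => (hXv h).1 rfl
  have hvR : v ∉ R := fun h => G.loopless.irrefl v h.1
  have hXR : Disjoint X R := Set.disjoint_left.mpr fun _ hu hR => hR.2.1 hu
  have hclass (c : Fin k) : Subtype.val '' C.colorClass c ⊆ R := by
    rintro _ ⟨u, -, rfl⟩
    exact u.2
  have hA : ∀ i, IsIndepSet G (A i) := by
    rintro (_ | _ | c)
    · exact Set.pairwise_singleton _ _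
    · exact hX
    · rintro _ ⟨u, hu, rfl⟩ _ ⟨u', hu', rfl⟩ - hadj
      exact C.valid hadj (hu.trans hu'.symm)
  have hdisj : Pairwise fun i j => Disjoint (A i) (A j) := by
    rintro (_ | _ | c) (_ | _ | c') hne
    · exact absurd rfl hne
    · exact Set.disjoint_singleton_left.mpr hvX
    · exact Set.disjoint_singleton_left.mpr fun h => hvR (hclass c' h)
    · exact Set.disjoint_singleton_right.mpr hvX
    · exact absurd rfl hne
    · exact hXR.mono_right (hclass c')
    · exact Set.disjoint_singleton_right.mpr fun h => hvR (hclass c h)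
    · exact (hXR.mono_right (hclass c)).symm
    · refine Set.disjoint_left.mpr ?_
      rintro _ ⟨u, hu, rfl⟩ ⟨u', hu', huu'⟩
      obtain rfl := Subtype.ext huu'
      exact hne (congrArg _ (congrArg _ (hu.symm.trans hu')))
  obtain ⟨w, hvw, hwA, hwX⟩ :=
    hG.exists_adj_of_mem ((finSuccEquiv (k + 1)).trans (finSuccEquiv k).optionCongr).symm
      hA hdisj (i := none) (j := some none) (by simp) rfl
  have hwR : w ∈ R := ⟨hvw, fun hw => (hXv hw).2 v rfl hvw, fun u hu hadj => hwX u hu hadj.symm⟩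
  exact hwA (some (some (C ⟨w, hwR⟩))) (by simp) ⟨⟨w, hwR⟩, rfl, rfl⟩

lemma ncard_neighborSet_inter_locSet_singleton_lt [Finite V] {G : SimpleGraph V} {v w x : V}
    (hvw : G.Adj v w) (hwx : G.Adj w x) :
    (G.neighborSet v ∩ locSet G {x}).ncard < (G.neighborSet v).ncard :=
  Set.ncard_lt_ncard ⟨Set.inter_subset_left, fun h => (h hvw).2.2 x rfl hwx.symm⟩

theorem wp_minDegree_general {V : Type*} [Finite V] (G : SimpleGraph V) (p : ℕ)
    (hWp : IsWp G p)
    (hcomp : ∀ c : G.ConnectedComponent, 1 < indepNum (G.induce c.supp)) :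
    ∀ v : V, p ≤ (G.neighborSet v).ncard := by
  intro v
  by_contra! hdeg
  rcases exists_adj_adj_or_exists_nonadj_neighbors (hcomp (G.connectedComponentMk v)) with
    ⟨w, x, hvw, hwx, hxv, hvx⟩ | ⟨a, b, hva, hvb, hab, hnadj⟩
  · have hR := ncard_neighborSet_inter_locSet_singleton_lt hvw hwx
    obtain ⟨k, rfl⟩ : ∃ k, p = k + 2 := ⟨p - 2, by omega⟩
    refine hWp.not_colorable_neighborSet_inter_locSet (Set.pairwise_singleton x _)
      (Set.singleton_subset_iff.mpr ⟨hxv, by rintro _ rfl; exact hvx⟩)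
      ((colorable_natCard _).mono ?_)
    rw [Nat.card_coe_set_eq]
    omega
  · have hdeg_two : 2 ≤ (G.neighborSet v).ncard :=
      Set.ncard_pair hab ▸ Set.ncard_le_ncard (Set.pair_subset hva hvb)
    obtain ⟨k, rfl⟩ : ∃ k, p = k + 2 := ⟨p - 2, by omega⟩
    refine hWp.not_colorable_neighborSet_inter_locSet (v := v) (Set.pairwise_empty _)
      (Set.empty_subset _) ?_
    rw [locSet_empty, Set.inter_univ]
    refine (colorable_natCard_sub_one_of_not_adj (G := G.induce (G.neighborSet v))
      (a := ⟨a, hva⟩) (b := ⟨b, hvb⟩) (Subtype.coe_ne_coe.mp hab) hnadj).mono ?_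
    rw [Nat.card_coe_set_eq]
    omega

/-- If every connected component of a finite `W_p` graph `G` has
independence number greater than `1`, then `δ(G) ≥ p`. -/
theorem wp_minDegree {V : Type*} [Finite V] (G : SimpleGraph V) (p : ℕ)
    (hp : 0 < p) (hWp : IsWp G p)
    (hcomp : ∀ c : G.ConnectedComponent, 1 < indepNum (G.induce c.supp)) :
    ∀ v : V, p ≤ (G.neighborSet v).ncard :=
  wp_minDegree_general G p hWp hcomp

end WpGraphs
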